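/- Let A be a real symmetric positive definite n×n matrix all of whose off-diagonal entries are non-positive (i.e. A i j ≤ 0 whenever i ≠ j). Then A is invertible and every entry of the inverse matrix A⁻¹ is non-negative. -/

import Mathlib

/-!
Split a vector `x` with `0 ≤ A x` as `x = x⁺ - x⁻`. Since `x⁺` and `x⁻` have disjoint supports and
the off-diagonal entries of `A` are non-positive, `x⁻ᵀ A x⁺ ≤ 0`; together with `x⁻ᵀ A x ≥ 0` this
gives `x⁻ᵀ A x⁻ ≤ 0`, so `x⁻ = 0` by positive definiteness. Applied to the columns of `A⁻¹`, which
`A` maps to the standard basis vectors, this shows that `A⁻¹` is entrywise non-negative.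
-/

namespace Matrix

variable {ι R : Type*} [Fintype ι]

lemma dotProduct_mulVec_nonpos_of_offDiag_nonpos [CommSemiring R] [PartialOrder R]
    [IsOrderedRing R] {A : Matrix ι ι R} (hoff : ∀ i j, i ≠ j → A i j ≤ 0) {u v : ι → R}
    (hu : 0 ≤ u) (hv : 0 ≤ v) (hvu : ∀ i, v i * u i = 0) : v ⬝ᵥ (A *ᵥ u) ≤ 0 := by
  simp only [dotProduct, mulVec, Finset.mul_sum]
  refine Finset.sum_nonpos fun i _ => Finset.sum_nonpos fun k _ => ?_
  rcases eq_or_ne i k with rfl | hik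
  · rw [mul_left_comm, hvu, mul_zero]
  · exact mul_nonpos_of_nonneg_of_nonpos (hv i)
      (mul_nonpos_of_nonpos_of_nonneg (hoff i k hik) (hu k))

variable [CommRing R] [LinearOrder R] [IsStrictOrderedRing R] [StarRing R] [TrivialStar R]

lemma PosDef.nonneg_of_mulVec_nonneg {A : Matrix ι ι R} (hA : A.PosDef)
    (hoff : ∀ i j, i ≠ j → A i j ≤ 0) {x : ι → R} (hAx : 0 ≤ A *ᵥ x) : 0 ≤ x := by
  have hdisj : ∀ i, x⁻ i * x⁺ i = 0 := fun i => by
    rcases le_total (x i) 0 with h | h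
    · simp [posPart_eq_zero.2 h]
    · simp [negPart_eq_zero.2 h]
  have hcross : x⁻ ⬝ᵥ (A *ᵥ x⁺) ≤ 0 :=
    dotProduct_mulVec_nonpos_of_offDiag_nonpos hoff (posPart_nonneg x) (negPart_nonneg x) hdisj
  have hsplit : A *ᵥ x = A *ᵥ x⁺ - A *ᵥ x⁻ := by rw [← mulVec_sub, posPart_sub_negPart]
  have hneg : x⁻ ⬝ᵥ (A *ᵥ x⁻) ≤ 0 := calc
    x⁻ ⬝ᵥ (A *ᵥ x⁻) = x⁻ ⬝ᵥ (A *ᵥ x⁺) - x⁻ ⬝ᵥ (A *ᵥ x) := by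
      rw [hsplit, dotProduct_sub, sub_sub_cancel]
    _ ≤ 0 := sub_nonpos.2 (hcross.trans (dotProduct_nonneg_of_nonneg (negPart_nonneg x) hAx))
  have hneg_zero : x⁻ = 0 := by
    by_contra hne
    have hpos := hA.dotProduct_mulVec_pos hne
    rw [star_trivial] at hpos
    exact hneg.not_gt hpos
  rw [← posPart_sub_negPart x, hneg_zero, sub_zero]
  exact posPart_nonneg x

lemma PosDef.inv_nonneg_of_offDiag_nonpos {K : Type*} [Field K] [LinearOrder K]
    [IsStrictOrderedRing K] [StarRing K] [TrivialStar K] [DecidableEq ι] {A : Matrix ι ι K}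
    (hA : A.PosDef) (hoff : ∀ i j, i ≠ j → A i j ≤ 0) (i j : ι) : 0 ≤ A⁻¹ i j := by
  have hAA : A * A⁻¹ = 1 := mul_nonsing_inv A ((isUnit_iff_isUnit_det A).1 hA.isUnit)
  have hcol : A *ᵥ (A⁻¹ *ᵥ Pi.single j 1) = Pi.single j 1 := by
    rw [mulVec_mulVec, hAA, one_mulVec]
  have hcol_nonneg := hA.nonneg_of_mulVec_nonneg hoff (hcol ▸ Pi.single_nonneg.2 zero_le_one)
  rw [mulVec_single_one] at hcol_nonneg
  exact hcol_nonneg i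

end Matrix

theorem posDef_offDiag_nonpos_inv_nonneg_general
    (n : ℕ) (A : Matrix (Fin n) (Fin n) ℝ)
    (hpos : A.PosDef)
    (hoff : ∀ i j : Fin n, i ≠ j → A i j ≤ 0) :
    IsUnit A ∧ ∀ i j : Fin n, 0 ≤ A⁻¹ i j :=
  ⟨hpos.isUnit, hpos.inv_nonneg_of_offDiag_nonpos hoff⟩

/-- A real symmetric positive definite matrix with non-positive off-diagonal entries
is invertible and its inverse has non-negative entries. -/
theorem posDef_offDiag_nonpos_inv_nonneg
    (n : ℕ) (A : Matrix (Fin n) (Fin n) ℝ)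
    (hsymm : A.IsSymm) (hpos : A.PosDef)
    (hoff : ∀ i j : Fin n, i ≠ j → A i j ≤ 0) :
    IsUnit A ∧ ∀ i j : Fin n, 0 ≤ A⁻¹ i j :=
  posDef_offDiag_nonpos_inv_nonneg_general n A hpos hoff
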